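/- Weyl differencing: for an integer k ≥ 2, K = 2^{k−1}, X ≥ 1, an interval I of length at most X, a real-valued function g on ℤ, and a real polynomial f, one has |Σ_{m ∈ I} g(m) e(f(m))|^K ≪ X^{K−k} · Σ_{|u_1|,...,|u_{k−1}| ≤ X} Σ_{m : (∗)} ∇(g(m); u_1,...,u_{k−1}) e(Δ(f(m); u_1,...,u_{k−1})), where (∗) requires m + Σ_{u ∈ 𝒰} u ∈ I for every subset 𝒰 ⊆ {u_1,...,u_{k−1}}. -/

import Mathlib

open Finset Complex

noncomputable def ee (x : ℝ) : ℂ := Complex.exp (2 * Real.pi * Complex.I * x)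

/-- forward difference `Δ(f; u)(n) = f(n+u) - f(n)` on functions -/
def fdiff (f : ℤ → ℝ) (u : ℤ) : ℤ → ℝ := fun n => f (n + u) - f n

/-- iterated forward difference -/
def fdiffs (f : ℤ → ℝ) : List ℤ → ℤ → ℝ
  | [] => f
  | u :: us => fdiffs (fdiff f u) us

/-- multiplicative difference `∇(g; u)(n) = g(n+u)·g(n)` -/
def mdiff (g : ℤ → ℝ) (u : ℤ) : ℤ → ℝ := fun n => g (n + u) * g n

/-- iterated multiplicative difference -/
def mdiffs (g : ℤ → ℝ) : List ℤ → ℤ → ℝ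
  | [] => g
  | u :: us => mdiffs (mdiff g u) us

/-!
Expanding `|S|² = S̄ S` and writing `m' = m + u` turns the square of a Weyl sum over `[a, b]` into
a sum over shifts `|u| ≤ H` of Weyl sums of `∇(g; u)` and `Δ(f; u)` over the subinterval where
both `m` and `m + u` lie. Hölder's inequality over the shifts lets one iterate this, and `k - 1`
differencing steps give the claim with `H = ⌊X⌋`.
-/

lemma ee_add (x y : ℝ) : ee (x + y) = ee x * ee y := by
  rw [ee, ee, ee, ← Complex.exp_add]
  push_cast
  ring_nf

lemma conj_ee (x : ℝ) : (starRingEnd ℂ) (ee x) = ee (-x) := by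
  rw [ee, ee, ← Complex.exp_conj]
  simp only [map_mul, Complex.conj_I, Complex.conj_ofReal, map_ofNat]
  push_cast
  ring_nf

lemma mem_Icc_and_add_mem_Icc_iff {a b x u : ℤ} :
    x ∈ Icc a b ∧ x + u ∈ Icc a b ↔ x ∈ Icc (max a (a - u)) (min b (b - u)) := by
  simp only [mem_Icc, max_le_iff, le_min_iff]
  omega

lemma sum_Icc_sum_Icc_eq_sum_shift {M : Type*} [AddCommMonoid M] {a b H : ℤ} (hab : b - a ≤ H)
    (w : ℤ → ℤ → M) :
    ∑ m ∈ Icc a b, ∑ m' ∈ Icc a b, w m m'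
      = ∑ u ∈ Icc (-H) H, ∑ m ∈ Icc (max a (a - u)) (min b (b - u)), w m (m + u) := by
  rw [← sum_product', sum_sigma']
  refine sum_nbij' (fun p => ⟨p.2 - p.1, p.1⟩) (fun p => (p.2, p.2 + p.1)) ?_ ?_ ?_ ?_ ?_
  · rintro ⟨m, m'⟩ h
    simp only [mem_product, mem_sigma, ← mem_Icc_and_add_mem_Icc_iff] at h ⊢
    exact ⟨by simp only [mem_Icc] at h ⊢; omega, h.1, by simpa using h.2⟩
  · rintro ⟨u, m⟩ h
    simp only [mem_sigma, ← mem_Icc_and_add_mem_Icc_iff] at h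
    exact mem_product.2 h.2
  all_goals simp

noncomputable def weylSum (a b : ℤ) (g F : ℤ → ℝ) : ℂ :=
  ∑ m ∈ Icc a b, (g m : ℂ) * ee (F m)

lemma conj_mul_ee_mul_ee (g F : ℤ → ℝ) (m u : ℤ) :
    (starRingEnd ℂ) (g m * ee (F m)) * (g (m + u) * ee (F (m + u)))
      = mdiff g u m * ee (fdiff F u m) := by
  rw [map_mul, Complex.conj_ofReal, conj_ee, mdiff, fdiff, sub_eq_neg_add, ee_add]
  push_cast
  ring

lemma norm_sq_weylSum {a b H : ℤ} (hab : b - a ≤ H) (g F : ℤ → ℝ) :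
    ‖weylSum a b g F‖ ^ 2
      = (∑ u ∈ Icc (-H) H,
          weylSum (max a (a - u)) (min b (b - u)) (mdiff g u) (fdiff F u)).re := by
  rw [← Complex.ofReal_re (_ ^ 2), Complex.ofReal_pow, ← Complex.conj_mul', weylSum, map_sum,
    sum_mul_sum, sum_Icc_sum_Icc_eq_sum_shift hab]
  simp only [weylSum, conj_mul_ee_mul_ee]

lemma norm_sq_weylSum_le_sum_norm {a b H : ℤ} (hab : b - a ≤ H) (g F : ℤ → ℝ) :
    ‖weylSum a b g F‖ ^ 2
      ≤ ∑ u ∈ Icc (-H) H,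
          ‖weylSum (max a (a - u)) (min b (b - u)) (mdiff g u) (fdiff F u)‖ := by
  rw [norm_sq_weylSum hab, Complex.re_sum]
  exact sum_le_sum fun u _ => Complex.re_le_norm _

/-- The double sum over `u` and over `m` subject to `(∗)` in the theorem, with `H = ⌊X⌋`. -/
noncomputable def differencedSum (n : ℕ) (H a b : ℤ) (g F : ℤ → ℝ) : ℂ :=
  ∑ u ∈ Fintype.piFinset (fun _ : Fin n => Icc (-H) H),
    ∑ m ∈ (Icc a b).filter (fun m => ∀ U : Finset (Fin n), m + ∑ i ∈ U, u i ∈ Icc a b),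
      (mdiffs g (List.ofFn u) m : ℂ) * ee (fdiffs F (List.ofFn u) m)

lemma differencedSum_zero (H a b : ℤ) (g F : ℤ → ℝ) :
    differencedSum 0 H a b g F = weylSum a b g F := by
  simp [differencedSum, weylSum, mdiffs, fdiffs, sum_of_isEmpty, filter_true_of_mem]

lemma forall_finset_fin_succ {n : ℕ} {P : Finset (Fin (n + 1)) → Prop} :
    (∀ U, P U) ↔
      ∀ U : Finset (Fin n),
        P (U.map (Fin.succEmb n)) ∧ P (insert 0 (U.map (Fin.succEmb n))) := by
  refine ⟨fun h U => ⟨h _, h _⟩, fun h U => ?_⟩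
  set V := U.preimage Fin.succ (Fin.succ_injective _).injOn
  by_cases h0 : 0 ∈ U
  · convert (h V).2
    ext i
    cases i using Fin.cases <;> simp [V, h0]
  · convert (h V).1
    ext i
    cases i using Fin.cases <;> simp [V, h0]

lemma forall_sum_cons_mem_Icc_iff {n : ℕ} {a b u m : ℤ} {v : Fin n → ℤ} :
    (∀ U : Finset (Fin (n + 1)), m + ∑ i ∈ U, Fin.cons u v i ∈ Icc a b)
      ↔ ∀ U : Finset (Fin n), m + ∑ i ∈ U, v i ∈ Icc (max a (a - u)) (min b (b - u)) := by
  rw [forall_finset_fin_succ]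
  refine forall_congr' fun U => ?_
  rw [sum_insert (by simp), sum_map, ← mem_Icc_and_add_mem_Icc_iff]
  simp only [Fin.coe_succEmb, Fin.cons_succ, Fin.cons_zero]
  rw [add_left_comm, add_comm u]

lemma mem_filter_forall_sum_mem_Icc_iff {n : ℕ} {a b m : ℤ} {u : Fin n → ℤ} :
    m ∈ (Icc a b).filter (fun m => ∀ U : Finset (Fin n), m + ∑ i ∈ U, u i ∈ Icc a b)
      ↔ ∀ U : Finset (Fin n), m + ∑ i ∈ U, u i ∈ Icc a b :=
  mem_filter.trans (and_iff_right_of_imp fun h => by simpa using h ∅)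

lemma differencedSum_succ (n : ℕ) (H a b : ℤ) (g F : ℤ → ℝ) :
    differencedSum (n + 1) H a b g F
      = ∑ u ∈ Icc (-H) H,
          differencedSum n H (max a (a - u)) (min b (b - u)) (mdiff g u) (fdiff F u) := by
  simp only [differencedSum]
  rw [← sum_product']
  symm
  refine sum_equiv (Fin.consEquiv fun _ => ℤ) (fun p => ?_) (fun ⟨u, v⟩ _ => ?_)
  · simp [Fin.consEquiv, Fin.forall_fin_succ]
  have hfilter : ((Icc a b).filter fun m =>
        ∀ U : Finset (Fin (n + 1)), m + ∑ i ∈ U, Fin.cons u v i ∈ Icc a b)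
      = (Icc (max a (a - u)) (min b (b - u))).filter fun m =>
        ∀ U : Finset (Fin n), m + ∑ i ∈ U, v i ∈ Icc (max a (a - u)) (min b (b - u)) := by
    ext m
    rw [mem_filter_forall_sum_mem_Icc_iff, mem_filter_forall_sum_mem_Icc_iff,
      forall_sum_cons_mem_Icc_iff]
  have hofn : List.ofFn (Fin.consEquiv (fun _ => ℤ) (u, v)) = u :: List.ofFn v :=
    List.ofFn_cons u v
  rw [hofn]
  exact (sum_congr hfilter fun _ _ => rfl).symm

lemma card_Icc_neg_self_le {H : ℤ} (hH : 1 ≤ H) : ((Icc (-H) H).card : ℝ) ≤ 3 * H := by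
  have hcard : ((Icc (-H) H).card : ℤ) = 2 * H + 1 := by
    rw [Int.card_Icc]
    omega
  have hH' : (1 : ℝ) ≤ H := by exact_mod_cast hH
  rw [show ((Icc (-H) H).card : ℝ) = 2 * H + 1 by exact_mod_cast hcard]
  linarith

/-- A differencing step costs `(3H)^(2^(n+1) - 1)` through Hölder over the `2H + 1 ≤ 3H` shifts,
and these exponents add up to `2^(n+1) - (n + 2)`. -/
theorem norm_weylSum_pow_le (n : ℕ) {H : ℤ} (hH : 1 ≤ H) {a b : ℤ} (hab : b - a ≤ H)
    (g F : ℤ → ℝ) :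
    ‖weylSum a b g F‖ ^ 2 ^ (n + 1)
      ≤ (3 * H : ℝ) ^ (2 ^ (n + 1) - (n + 2)) * (differencedSum (n + 1) H a b g F).re := by
  induction n generalizing a b g F with
  | zero =>
    simp [differencedSum_succ, differencedSum_zero, ← norm_sq_weylSum hab]
  | succ n ih =>
    set N := 2 ^ (n + 1)
    have hN : n + 2 ≤ N := Nat.lt_two_pow_self
    have hN' : 2 ^ (n + 2) = 2 * N := by rw [pow_succ, mul_comm]
    set J := Icc (-H) H
    set t := fun u => ‖weylSum (max a (a - u)) (min b (b - u)) (mdiff g u) (fdiff F u)‖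
    set R := fun u =>
      (differencedSum (n + 1) H (max a (a - u)) (min b (b - u)) (mdiff g u) (fdiff F u)).re
    have hpow : (∑ u ∈ J, t u) ^ N ≤ (J.card : ℝ) ^ (N - 1) * ∑ u ∈ J, t u ^ N := by
      have := pow_sum_le_card_mul_sum_pow (s := J) (f := t) (fun _ _ => norm_nonneg _) (N - 1)
      rwa [Nat.sub_add_cancel (by omega : 1 ≤ N)] at this
    calc ‖weylSum a b g F‖ ^ 2 ^ (n + 2)
        = (‖weylSum a b g F‖ ^ 2) ^ N := by rw [hN', pow_mul]
      _ ≤ (∑ u ∈ J, t u) ^ N := by gcongr; exact norm_sq_weylSum_le_sum_norm hab g F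
      _ ≤ (3 * H : ℝ) ^ (N - 1) * ∑ u ∈ J, t u ^ N := by
        refine hpow.trans ?_
        gcongr
        exact card_Icc_neg_self_le hH
      _ ≤ (3 * H : ℝ) ^ (N - 1) * ∑ u ∈ J, (3 * H : ℝ) ^ (N - (n + 2)) * R u := by
        gcongr with u
        exact ih (by omega) _ _
      _ = (3 * H : ℝ) ^ (2 ^ (n + 2) - (n + 3)) * (differencedSum (n + 2) H a b g F).re := by
        rw [← mul_sum, ← mul_assoc, ← pow_add, differencedSum_succ, re_sum, hN']
        congr 2
        omega

theorem weyl_differencing (k : ℕ) (hk : 2 ≤ k) :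
    ∃ C : ℝ, 0 < C ∧ ∀ X : ℝ, 1 ≤ X → ∀ a b : ℤ, ((b - a : ℤ) : ℝ) ≤ X →
      ∀ g : ℤ → ℝ, ∀ f : Polynomial ℝ,
      (‖∑ m ∈ Finset.Icc a b, (g m : ℂ) * ee (f.eval (m : ℝ))‖) ^ (2 ^ (k - 1))
        ≤ C * X ^ ((2 ^ (k - 1) : ℝ) - k) *
          (∑ u ∈ Fintype.piFinset (fun _ : Fin (k - 1) => Finset.Icc (-⌊X⌋) ⌊X⌋),
            ∑ m ∈ (Finset.Icc a b).filter
                (fun m => ∀ U : Finset (Fin (k - 1)),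
                  m + ∑ i ∈ U, u i ∈ Finset.Icc a b),
              (mdiffs g (List.ofFn u) m : ℂ) *
                ee (fdiffs (fun n => f.eval (n : ℝ)) (List.ofFn u) m)).re := by
  obtain ⟨n, rfl⟩ : ∃ n, k = n + 2 := ⟨k - 2, by omega⟩
  have hN : n + 2 ≤ 2 ^ (n + 1) := Nat.lt_two_pow_self
  refine ⟨3 ^ (2 ^ (n + 1) - (n + 2)), by positivity, fun X hX a b hab g f => ?_⟩
  have hH : 1 ≤ ⌊X⌋ := Int.le_floor.2 (by exact_mod_cast hX)
  have hbound := norm_weylSum_pow_le n hH (Int.le_floor.2 hab) g fun m => f.eval (m : ℝ)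
  set R := (differencedSum (n + 1) ⌊X⌋ a b g fun m => f.eval (m : ℝ)).re
  have hR : 0 ≤ R := nonneg_of_mul_nonneg_right ((by positivity : (0 : ℝ) ≤ _).trans hbound)
    (by positivity)
  calc _ ≤ (3 * ⌊X⌋ : ℝ) ^ (2 ^ (n + 1) - (n + 2)) * R := hbound
    _ ≤ (3 * X) ^ (2 ^ (n + 1) - (n + 2)) * R := by gcongr; exact Int.floor_le X
    _ = _ := by
      rw [mul_pow, ← Real.rpow_natCast X, Nat.cast_sub hN]
      push_cast
      rfl
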